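/- Suppose an alternating sign matrix A classically avoids 3412 and has two −1 entries at positions (i_a, j_a) and (i_b, j_b) with i_a < i_b and j_a < j_b. Let P_1 be the set of positions obtained from (i_a, j_a) by east steps to column j_b then south steps to row i_b, and let P_2 be the set obtained by south steps to row i_b then east steps to column j_b. Then A has a 1 entry at some position on P_1 ∪ P_2. -/
import Mathlib

def IsASM {n : ℕ} (A : Matrix (Fin n) (Fin n) ℤ) : Prop :=
  (∀ i j, A i j = -1 ∨ A i j = 0 ∨ A i j = 1) ∧
  (∀ i, ∑ j, A i j = 1) ∧
  (∀ j, ∑ i, A i j = 1) ∧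
  (∀ i j, ∑ l ∈ Finset.Iic j, A i l = 0 ∨ ∑ l ∈ Finset.Iic j, A i l = 1) ∧
  (∀ i j, ∑ l ∈ Finset.Iic i, A l j = 0 ∨ ∑ l ∈ Finset.Iic i, A l j = 1)

def ASMContains {n m : ℕ} (A : Matrix (Fin n) (Fin n) ℤ) (σ : Equiv.Perm (Fin m)) : Prop :=
  ∃ f g : Fin m ↪o Fin n, ∀ a, A (f a) (g (σ a)) = 1

def ASMAvoids {n m : ℕ} (A : Matrix (Fin n) (Fin n) ℤ) (σ : Equiv.Perm (Fin m)) : Prop :=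
  ¬ ASMContains A σ

def p3412 : Equiv.Perm (Fin 4) := ⟨![2,3,0,1], ![2,3,0,1], by decide, by decide⟩

section helpers
open Finset

lemma helper_zero {n : ℕ} (f : Fin n → ℤ)
    (hs : ∀ j, (∑ l ∈ Iic j, f l) = 0 ∨ (∑ l ∈ Iic j, f l) = 1)
    (j : Fin n) (hneg : f j = -1) : ∑ l ∈ Iic j, f l = 0 := by
  rcases hs j with h | h
  · exact h
  · exfalso
    have hins : insert j (Iio j) = Iic j := Finset.Iio_insert j
    have hsum : ∑ l ∈ Iic j, f l = f j + ∑ l ∈ Iio j, f l := by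
      rw [← hins, Finset.sum_insert (by simp)]
    have h2 : ∑ l ∈ Iio j, f l = 2 := by omega
    rcases Nat.eq_zero_or_pos j.val with h0 | h0
    · have : Iio j = ∅ := by
        ext x; simp only [Finset.mem_Iio, Finset.notMem_empty, iff_false, not_lt, Fin.le_def]; omega
      rw [this] at h2; simp at h2
    · have hm : j.val - 1 < n := by omega
      have : Iio j = Iic ⟨j.val - 1, hm⟩ := by
        ext x; simp only [Finset.mem_Iio, Finset.mem_Iic, Fin.lt_def, Fin.le_def]; omega
      rw [this] at h2
      rcases hs ⟨j.val - 1, hm⟩ with h' | h' <;> omega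

lemma helper_exists_one {n : ℕ} (f : Fin n → ℤ) (s : Finset (Fin n))
    (hv : ∀ x, f x = -1 ∨ f x = 0 ∨ f x = 1)
    (h : 0 < ∑ x ∈ s, f x) : ∃ x ∈ s, f x = 1 := by
  by_contra hc
  push_neg at hc
  have : ∑ x ∈ s, f x ≤ 0 := Finset.sum_nonpos (fun x hx => by
    rcases hv x with h' | h' | h' <;> [omega; omega; exact absurd h' (hc x hx)])
  omega

-- generic "first in a line": given f with values in {-1,0,1}, total sum 1,
-- partial sums in {0,1}, f a = -1, no 1 on [a,b], a ≤ b: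
-- then ∃ x > b, f x = 1  and  ∃ x < a ... (two lemmas about 1-dim)
lemma helper_after {n : ℕ} (f : Fin n → ℤ)
    (hv : ∀ x, f x = -1 ∨ f x = 0 ∨ f x = 1)
    (htot : ∑ x, f x = 1)
    (hs : ∀ j, (∑ l ∈ Iic j, f l) = 0 ∨ (∑ l ∈ Iic j, f l) = 1)
    (a b : Fin n) (hab : a ≤ b) (hneg : f a = -1)
    (hno : ∀ x, a ≤ x → x ≤ b → f x ≠ 1) :
    ∃ x, b < x ∧ f x = 1 := by
  have hSa : ∑ l ∈ Iic a, f l = 0 := helper_zero f hs a hneg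
  have hsplit : Iic a ∪ Ioc a b = Iic b := by
    ext x
    simp only [Finset.mem_union, Finset.mem_Iic, Finset.mem_Ioc]
    constructor
    · rintro (h | ⟨_, h⟩) <;> [exact le_trans h hab; exact h]
    · intro h; rcases le_or_gt x a with h' | h' <;> [exact Or.inl h'; exact Or.inr ⟨h', h⟩]
  have hdisj : Disjoint (Iic a) (Ioc a b) := by
    rw [Finset.disjoint_left]
    intro x hx hx'
    simp only [Finset.mem_Iic] at hx
    simp only [Finset.mem_Ioc] at hx'
    exact absurd hx (not_le.mpr hx'.1)
  have hSb : ∑ l ∈ Iic b, f l = 0 := by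
    have h1 : ∑ l ∈ Iic b, f l = ∑ l ∈ Iic a, f l + ∑ l ∈ Ioc a b, f l := by
      rw [← hsplit, Finset.sum_union hdisj]
    have h2 : ∑ l ∈ Ioc a b, f l ≤ 0 := Finset.sum_nonpos (fun x hx => by
      simp only [Finset.mem_Ioc] at hx
      have := hno x (le_of_lt hx.1) hx.2
      rcases hv x with h' | h' | h' <;> omega)
    rcases hs b with h' | h' <;> omega
  have huniv : Iic b ∪ Ioi b = Finset.univ := by
    ext x
    simp only [Finset.mem_union, Finset.mem_Iic, Finset.mem_Ioi, Finset.mem_univ, iff_true]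
    exact le_or_gt x b
  have hdisj2 : Disjoint (Iic b) (Ioi b) := by
    rw [Finset.disjoint_left]
    intro x hx hx'
    simp only [Finset.mem_Iic] at hx
    simp only [Finset.mem_Ioi] at hx'
    exact absurd hx (not_le.mpr hx')
  have hIoi : 0 < ∑ l ∈ Ioi b, f l := by
    have : ∑ l ∈ Iic b, f l + ∑ l ∈ Ioi b, f l = 1 := by
      rw [← Finset.sum_union hdisj2, huniv, htot]
    omega
  obtain ⟨x, hx, hx1⟩ := helper_exists_one f _ hv hIoi
  exact ⟨x, Finset.mem_Ioi.mp hx, hx1⟩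

lemma helper_before {n : ℕ} (f : Fin n → ℤ)
    (hv : ∀ x, f x = -1 ∨ f x = 0 ∨ f x = 1)
    (hs : ∀ j, (∑ l ∈ Iic j, f l) = 0 ∨ (∑ l ∈ Iic j, f l) = 1)
    (a b : Fin n) (hab : a ≤ b) (hneg : f b = -1)
    (hno : ∀ x, a ≤ x → x ≤ b → f x ≠ 1) :
    ∃ x, x < a ∧ f x = 1 := by
  have hSb : ∑ l ∈ Iic b, f l = 0 := helper_zero f hs b hneg
  have hsplit : Iio a ∪ Icc a b = Iic b := by
    ext x
    simp only [Finset.mem_union, Finset.mem_Iio, Finset.mem_Icc, Finset.mem_Iic]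
    constructor
    · rintro (h | ⟨_, h⟩) <;> [exact le_trans (le_of_lt h) hab; exact h]
    · intro h; rcases lt_or_ge x a with h' | h' <;> [exact Or.inl h'; exact Or.inr ⟨h', h⟩]
  have hdisj : Disjoint (Iio a) (Icc a b) := by
    rw [Finset.disjoint_left]
    intro x hx hx'
    simp only [Finset.mem_Iio] at hx
    simp only [Finset.mem_Icc] at hx'
    exact absurd hx'.1 (not_le.mpr hx)
  have hIcc : ∑ l ∈ Icc a b, f l ≤ -1 := by
    have hins : insert b (Ico a b) = Icc a b := by
      ext x
      simp only [Finset.mem_insert, Finset.mem_Ico, Finset.mem_Icc]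
      constructor
      · rintro (rfl | ⟨h1, h2⟩) <;> [exact ⟨hab, le_refl _⟩; exact ⟨h1, le_of_lt h2⟩]
      · rintro ⟨h1, h2⟩
        rcases eq_or_lt_of_le h2 with rfl | h' <;> [exact Or.inl rfl; exact Or.inr ⟨h1, h'⟩]
    have hnb : b ∉ Ico a b := by simp
    have : ∑ l ∈ Icc a b, f l = f b + ∑ l ∈ Ico a b, f l := by
      rw [← hins, Finset.sum_insert hnb]
    have h2 : ∑ l ∈ Ico a b, f l ≤ 0 := Finset.sum_nonpos (fun x hx => by
      simp only [Finset.mem_Ico] at hx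
      have := hno x hx.1 (le_of_lt hx.2)
      rcases hv x with h' | h' | h' <;> omega)
    omega
  have hIio : 0 < ∑ l ∈ Iio a, f l := by
    have : ∑ l ∈ Iio a, f l + ∑ l ∈ Icc a b, f l = 0 := by
      rw [← Finset.sum_union hdisj, hsplit, hSb]
    omega
  obtain ⟨x, hx, hx1⟩ := helper_exists_one f _ hv hIio
  exact ⟨x, Finset.mem_Iio.mp hx, hx1⟩


lemma strictMono4 {α : Type*} [Preorder α] {a b c d : α} (h1 : a < b) (h2 : b < c) (h3 : c < d) :
    StrictMono (![a, b, c, d]) := by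
  have h12 := h1.trans h2
  have h23 := h2.trans h3
  have h13 := h12.trans h3
  intro x y hxy
  fin_cases x <;> fin_cases y <;> simp_all
end helpers

theorem statement11 {n : ℕ} (A : Matrix (Fin n) (Fin n) ℤ) (hA : IsASM A)
    (h3412 : ASMAvoids A p3412)
    (ia ja ib jb : Fin n) (h1 : A ia ja = -1) (h2 : A ib jb = -1)
    (hi : ia < ib) (hj : ja < jb) :
    ∃ p : Fin n × Fin n,
      ((p.1 = ia ∧ ja ≤ p.2 ∧ p.2 ≤ jb) ∨ (p.2 = jb ∧ ia ≤ p.1 ∧ p.1 ≤ ib) ∨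
       (p.2 = ja ∧ ia ≤ p.1 ∧ p.1 ≤ ib) ∨ (p.1 = ib ∧ ja ≤ p.2 ∧ p.2 ≤ jb)) ∧
      A p.1 p.2 = 1 := by
  obtain ⟨hval, hrow, hcol, hrowp, hcolp⟩ := hA
  by_contra hcon
  push_neg at hcon
  -- the four "no 1 on the path" conditions
  have hN1 : ∀ j, ja ≤ j → j ≤ jb → A ia j ≠ 1 := fun j hl hr =>
    hcon (ia, j) (Or.inl ⟨rfl, hl, hr⟩)
  have hN2 : ∀ i, ia ≤ i → i ≤ ib → A i jb ≠ 1 := fun i hl hr =>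
    hcon (i, jb) (Or.inr (Or.inl ⟨rfl, hl, hr⟩))
  have hN3 : ∀ i, ia ≤ i → i ≤ ib → A i ja ≠ 1 := fun i hl hr =>
    hcon (i, ja) (Or.inr (Or.inr (Or.inl ⟨rfl, hl, hr⟩)))
  have hN4 : ∀ j, ja ≤ j → j ≤ jb → A ib j ≠ 1 := fun j hl hr =>
    hcon (ib, j) (Or.inr (Or.inr (Or.inr ⟨rfl, hl, hr⟩)))
  -- the four 1-entries
  obtain ⟨c1, hc1, hc1one⟩ : ∃ x, jb < x ∧ A ia x = 1 :=
    helper_after (A ia) (hval ia) (hrow ia) (hrowp ia) ja jb hj.le h1 hN1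
  obtain ⟨r1, hr1, hr1one⟩ : ∃ x, ib < x ∧ A x ja = 1 :=
    helper_after (fun l => A l ja) (fun l => hval l ja)
      (hcol ja) (fun i => hcolp i ja) ia ib hi.le h1 hN3
  obtain ⟨r2, hr2, hr2one⟩ : ∃ x, x < ia ∧ A x jb = 1 :=
    helper_before (fun l => A l jb) (fun l => hval l jb)
      (fun i => hcolp i jb) ia ib hi.le h2 hN2
  obtain ⟨c2, hc2, hc2one⟩ : ∃ x, x < ja ∧ A ib x = 1 :=
    helper_before (A ib) (hval ib) (hrowp ib) ja jb hj.le h2 hN4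
  -- build a 3412 pattern
  apply h3412
  have hf : StrictMono (![r2, ia, ib, r1] : Fin 4 → Fin n) := strictMono4 hr2 hi hr1
  have hg : StrictMono (![c2, ja, jb, c1] : Fin 4 → Fin n) := strictMono4 hc2 hj hc1
  refine ⟨OrderEmbedding.ofStrictMono _ hf, OrderEmbedding.ofStrictMono _ hg, ?_⟩
  intro a
  fin_cases a <;>
    simp [p3412, OrderEmbedding.ofStrictMono, Equiv.coe_fn_mk] <;>
    assumption
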